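/- arXiv:2602.12035 — 2 statements merged into one kernel-verified Lean document; each statement's English description precedes it below -/
import Mathlib

section
/- Let ι be a nonempty finite index set, let 0 ≤ β < 1, and let f : (ι → ℝ) → (ι → ℝ) satisfy ‖f(Q) − f(Q')‖_∞ ≤ β·‖Q − Q'‖_∞ for all Q, Q' (sup norm), with fixed point Q* (f(Q*) = Q*). Suppose Q : ℝ → (ι → ℝ) is differentiable and satisfies the ODE Q'(t) = f(Q(t)) − Q(t) for all t ≥ 0. Then for all t ≥ 0, ‖Q(t) − Q*‖_∞ ≤ exp((β − 1)·t)·‖Q(0) − Q*‖_∞. -/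
/-- Lyapunov argument: along trajectories of the contraction-driven ODE
`Q̇ = f(Q) − Q`, where `f` is a sup-norm contraction with modulus `β < 1`
and fixed point `Q*`, the distance to `Q*` decays at exponential rate `β − 1`. -/
theorem ode_contraction_decay {ι : Type*} [Fintype ι] [Nonempty ι]
    (β : ℝ) (hβ0 : 0 ≤ β) (hβ1 : β < 1)
    (f : (ι → ℝ) → (ι → ℝ))
    (hf : ∀ Q Q' : ι → ℝ, ‖f Q - f Q'‖ ≤ β * ‖Q - Q'‖)
    (Qstar : ι → ℝ) (hfix : f Qstar = Qstar)
    (Q : ℝ → ι → ℝ) (hdiff : Differentiable ℝ Q)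
    (hode : ∀ t : ℝ, 0 ≤ t → deriv Q t = f (Q t) - Q t) :
    ∀ t : ℝ, 0 ≤ t →
      ‖Q t - Qstar‖ ≤ Real.exp ((β - 1) * t) * ‖Q 0 - Qstar‖ := by
  intro T hT
  set g : ℝ → ι → ℝ := fun t => Real.exp t • (Q t - Qstar) with hg
  have hgd : ∀ t ∈ Set.Ico (0:ℝ) T,
      HasDerivWithinAt g (Real.exp t • (f (Q t) - Qstar)) (Set.Ici t) t := by
    intro t ht
    have h1 : HasDerivAt (fun s => Q s - Qstar) (deriv Q t) t :=
      ((hdiff t).hasDerivAt).sub_const Qstar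
    have h2 := (Real.hasDerivAt_exp t).smul h1
    have heq : Real.exp t • deriv Q t + Real.exp t • (Q t - Qstar)
        = Real.exp t • (f (Q t) - Qstar) := by
      rw [hode t ht.1, ← smul_add]
      congr 1
      abel
    rw [heq] at h2
    exact h2.hasDerivWithinAt
  have hbound : ∀ t ∈ Set.Ico (0:ℝ) T,
      ‖Real.exp t • (f (Q t) - Qstar)‖ ≤ β * ‖g t‖ + 0 := by
    intro t _
    rw [add_zero, norm_smul, hg]
    simp only [norm_smul, Real.norm_eq_abs, abs_of_pos (Real.exp_pos t)]
    calc Real.exp t * ‖f (Q t) - Qstar‖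
        = Real.exp t * ‖f (Q t) - f Qstar‖ := by rw [hfix]
      _ ≤ Real.exp t * (β * ‖Q t - Qstar‖) := by
          exact mul_le_mul_of_nonneg_left (hf _ _) (Real.exp_pos t).le
      _ = β * (Real.exp t * ‖Q t - Qstar‖) := by ring
  have h0 : ‖g 0‖ ≤ ‖Q 0 - Qstar‖ := by
    simp [hg]
  have hgc : ContinuousOn g (Set.Icc 0 T) :=
    ((Real.continuous_exp).smul (hdiff.continuous.sub continuous_const)).continuousOn
  have := norm_le_gronwallBound_of_norm_deriv_right_le hgc hgd h0 hbound T
    (Set.right_mem_Icc.2 hT)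
  rw [gronwallBound_ε0, sub_zero] at this
  have hgT : ‖g T‖ = Real.exp T * ‖Q T - Qstar‖ := by
    rw [hg]
    simp [norm_smul, Real.norm_eq_abs, abs_of_pos (Real.exp_pos T)]
  rw [hgT] at this
  have hexp : Real.exp ((β - 1) * T) = Real.exp (β * T) / Real.exp T := by
    rw [← Real.exp_sub]; ring_nf
  rw [hexp]
  rw [div_mul_eq_mul_div, le_div_iff₀ (Real.exp_pos T)]
  calc ‖Q T - Qstar‖ * Real.exp T = Real.exp T * ‖Q T - Qstar‖ := by ring
    _ ≤ ‖Q 0 - Qstar‖ * Real.exp (β * T) := this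
    _ = Real.exp (β * T) * ‖Q 0 - Qstar‖ := by ring
end

section
/- Let K ≥ 2, let x_k = (k−1)/(K−1) for k = 1, …, K, let 0 < ε < 1 and ν ≥ 0, and let μ : Fin K → ℝ satisfy 0 ≤ μ(k) ≤ ν for all k. Define weights w(k) = ε/K + (1−ε)·μ(k) and the posterior mean y = (∑_k x_k·w(k)) / (∑_k w(k)). Then |y − 1/2| ≤ (1−ε)·K·ν/(2ε). -/
/-- Lemma 2 of the paper (unused messages): on the uniform grid
`x_k = k/(K-1)`, `k = 0, …, K-1`, if the message's softmax probability in every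
state is at most `ν`, then with `ε`-uniform exploration the receiver's posterior
mean after this message is within `(1−ε) K ν / (2ε)` of the prior mean `1/2`. -/
theorem unused_message_posterior (K : ℕ) (hK : 2 ≤ K)
    (ε ν : ℝ) (hε0 : 0 < ε) (hε1 : ε < 1) (hν : 0 ≤ ν)
    (μ : Fin K → ℝ) (hμ : ∀ k, 0 ≤ μ k ∧ μ k ≤ ν) :
    |(∑ k : Fin K, ((k : ℝ) / ((K : ℝ) - 1)) * (ε / (K : ℝ) + (1 - ε) * μ k)) /
        (∑ k : Fin K, (ε / (K : ℝ) + (1 - ε) * μ k)) - 1 / 2|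
      ≤ (1 - ε) * (K : ℝ) * ν / (2 * ε) := by
  have hKR : (2:ℝ) ≤ (K:ℝ) := by exact_mod_cast hK
  have hc : (0:ℝ) < (K:ℝ) - 1 := by linarith
  have hK0 : (0:ℝ) < (K:ℝ) := by linarith
  set x : Fin K → ℝ := fun k => (k : ℝ) / ((K:ℝ) - 1) with hx
  set w : Fin K → ℝ := fun k => ε / (K:ℝ) + (1 - ε) * μ k with hw
  have hεK : 0 < ε / (K:ℝ) := div_pos hε0 hK0
  have hwnn : ∀ k, 0 ≤ w k := fun k => by
    have := (hμ k).1; simp only [hw]; nlinarith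
  have hSe : ε ≤ ∑ k : Fin K, w k := by
    have h1 : ∑ _k : Fin K, ε / (K:ℝ) = ε := by
      rw [Finset.sum_const, Finset.card_univ, Fintype.card_fin, nsmul_eq_mul]
      field_simp
    calc ε = ∑ _k : Fin K, ε / (K:ℝ) := h1.symm
      _ ≤ ∑ k : Fin K, w k := Finset.sum_le_sum fun k _ => by
          have := (hμ k).1; simp only [hw]; nlinarith
  have hSpos : 0 < ∑ k : Fin K, w k := lt_of_lt_of_le hε0 hSe
  -- sum of the grid points
  have hnatsum : (∑ k : Fin K, (k:ℝ)) = (K:ℝ) * ((K:ℝ) - 1) / 2 := by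
    have h := Finset.sum_range_id_mul_two K
    have h1 : (1:ℕ) ≤ K := by omega
    have h2 : ((∑ i ∈ Finset.range K, (i:ℕ) : ℕ) : ℝ) * 2 = (K:ℝ) * ((K:ℝ) - 1) := by
      calc ((∑ i ∈ Finset.range K, (i:ℕ) : ℕ) : ℝ) * 2
          = (((∑ i ∈ Finset.range K, i) * 2 : ℕ) : ℝ) := by push_cast; ring
        _ = ((K * (K - 1) : ℕ) : ℝ) := by exact_mod_cast congrArg Nat.cast h
        _ = (K:ℝ) * ((K:ℝ) - 1) := by push_cast [Nat.cast_sub h1]; ring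
    rw [Fin.sum_univ_eq_sum_range]
    push_cast at h2 ⊢
    linarith
  have hxsum : ∑ k : Fin K, x k = (K:ℝ) / 2 := by
    simp only [hx, div_eq_mul_inv, ← Finset.sum_mul, hnatsum]
    field_simp
  have hxb : ∀ k : Fin K, |x k - 1/2| ≤ 1/2 := by
    intro k
    have h0 : 0 ≤ x k := div_nonneg (Nat.cast_nonneg _) hc.le
    have h1 : x k ≤ 1 := by
      rw [hx, div_le_one hc]
      have : (k:ℕ) < K := k.2
      have : ((k:ℕ):ℝ) ≤ (K:ℝ) - 1 := by
        have : ((k:ℕ):ℝ) + 1 ≤ (K:ℝ) := by exact_mod_cast Nat.succ_le_of_lt k.2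
        linarith
      exact_mod_cast this
    rw [abs_le]; constructor <;> linarith
  -- numerator
  set N : ℝ := ∑ k : Fin K, (x k - 1/2) * w k with hN
  have hNeq : (∑ k : Fin K, x k * w k) - (1/2) * (∑ k : Fin K, w k) = N := by
    rw [hN, Finset.mul_sum, ← Finset.sum_sub_distrib]
    congr 1; funext k; ring
  have hNval : N = ∑ k : Fin K, (x k - 1/2) * ((1 - ε) * μ k) := by
    rw [hN]
    have : ∀ k : Fin K, (x k - 1/2) * w k
        = (x k - 1/2) * (ε / (K:ℝ)) + (x k - 1/2) * ((1 - ε) * μ k) := by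
      intro k; simp only [hw]; ring
    rw [Finset.sum_congr rfl fun k _ => this k, Finset.sum_add_distrib]
    have hz : ∑ k : Fin K, (x k - 1/2) * (ε / (K:ℝ)) = 0 := by
      rw [← Finset.sum_mul, Finset.sum_sub_distrib, hxsum, Finset.sum_const,
        Finset.card_univ, Fintype.card_fin, nsmul_eq_mul]
      ring
    rw [hz, zero_add]
  have hNb : |N| ≤ (1 - ε) * (K:ℝ) * ν / 2 := by
    rw [hNval]
    calc |∑ k : Fin K, (x k - 1/2) * ((1 - ε) * μ k)|
        ≤ ∑ k : Fin K, |(x k - 1/2) * ((1 - ε) * μ k)| := Finset.abs_sum_le_sum_abs _ _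
      _ ≤ ∑ _k : Fin K, (1/2) * ((1 - ε) * ν) := by
          apply Finset.sum_le_sum
          intro k _
          rw [abs_mul]
          have h1 : |(1 - ε) * μ k| = (1 - ε) * μ k := by
            rw [abs_of_nonneg]; nlinarith [(hμ k).1]
          rw [h1]
          have := (hμ k).1; have := (hμ k).2
          have h2 : (1 - ε) * μ k ≤ (1 - ε) * ν := by nlinarith
          have h3 := hxb k
          have h4 : 0 ≤ (1 - ε) * μ k := by nlinarith
          exact mul_le_mul h3 h2 h4 (by norm_num)
      _ = (1 - ε) * (K:ℝ) * ν / 2 := by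
          rw [Finset.sum_const, Finset.card_univ, Fintype.card_fin, nsmul_eq_mul]
          ring
  -- conclude
  have key : (∑ k : Fin K, x k * w k) / (∑ k : Fin K, w k) - 1/2
      = N / (∑ k : Fin K, w k) := by
    have hS0 : (∑ k : Fin K, w k) ≠ 0 := ne_of_gt hSpos
    rw [← hNeq, sub_div, mul_div_assoc, div_self hS0, mul_one]
  calc |(∑ k : Fin K, x k * w k) / (∑ k : Fin K, w k) - 1/2|
      = |N| / (∑ k : Fin K, w k) := by rw [key, abs_div, abs_of_pos hSpos]
    _ ≤ |N| / ε := by gcongr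
    _ ≤ ((1 - ε) * (K:ℝ) * ν / 2) / ε := by gcongr
    _ = (1 - ε) * (K:ℝ) * ν / (2 * ε) := by ring
end
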